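/- Let (aₘ) be a sequence of nonnegative reals and (bₘ) a sequence of positive reals such that a_m b_m^{-2} ≤ a_{m-1} b_{m-1}^{-2} (1 − C² a_{m-1} b_{m-1}^{-2}) with 0 < C² a_{m-1} b_{m-1}^{-2} ≤ 1 for all m. Then a_m b_m^{-2} ≤ a_0 b_0^{-2} / (1 + C² a_0 b_0^{-2} m) for all m ≥ 0. -/
import Mathlib


/-- Temlyakov-type recursion bound: if `xₘ = aₘ/bₘ²` satisfies
`xₘ ≤ x_{m-1}(1 - C² x_{m-1})` with `0 < C² x_{m-1} ≤ 1`, then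
`xₘ ≤ x₀ / (1 + C² x₀ m)`. -/
theorem temlyakov_recursion_bound
    (a b : ℕ → ℝ) (C : ℝ)
    (ha : ∀ m, 0 ≤ a m) (hb : ∀ m, 0 < b m)
    (hrec : ∀ m, 1 ≤ m →
      a m / (b m) ^ 2 ≤
        a (m - 1) / (b (m - 1)) ^ 2 *
          (1 - C ^ 2 * (a (m - 1) / (b (m - 1)) ^ 2)))
    (hbd : ∀ m, 1 ≤ m →
      0 < C ^ 2 * (a (m - 1) / (b (m - 1)) ^ 2) ∧
        C ^ 2 * (a (m - 1) / (b (m - 1)) ^ 2) ≤ 1) :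
    ∀ m : ℕ, a m / (b m) ^ 2 ≤
      (a 0 / (b 0) ^ 2) / (1 + C ^ 2 * (a 0 / (b 0) ^ 2) * m) := by
  set x : ℕ → ℝ := fun m => a m / (b m) ^ 2 with hx
  have hxnn : ∀ m, 0 ≤ x m := fun m => div_nonneg (ha m) (sq_nonneg _)
  have hxpos : ∀ m, 0 < x m := by
    intro m
    have h := (hbd (m + 1) (Nat.le_add_left 1 m)).1
    simp only [Nat.add_sub_cancel] at h
    nlinarith [sq_nonneg C, hxnn m]
  have key : ∀ m : ℕ, 1 / x 0 + C ^ 2 * m ≤ 1 / x m := by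
    intro m
    induction m with
    | zero => simp
    | succ n ih =>
      have hr := hrec (n + 1) (Nat.le_add_left 1 n)
      have hbd' := hbd (n + 1) (Nat.le_add_left 1 n)
      simp only [Nat.add_sub_cancel] at hr hbd'
      have hy : 0 < x n := hxpos n
      have hz : 0 < x (n + 1) := hxpos (n + 1)
      have h1 : (1 / x n + C ^ 2) * x (n + 1) ≤ 1 := by
        have hyy : (1 / x n) * x n = 1 := one_div_mul_cancel (ne_of_gt hy)
        have hf : 0 ≤ 1 / x n + C ^ 2 := by positivity
        have h1' := mul_le_mul_of_nonneg_left hr hf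
        nlinarith [h1', hyy, sq_nonneg (C ^ 2 * x n)]
      have h2 : 1 / x n + C ^ 2 ≤ 1 / x (n + 1) := by
        rw [le_div_iff₀ hz]
        simpa using h1
      push_cast
      linarith
  intro m
  have h0 : 0 < x 0 := hxpos 0
  have hm : 0 < x m := hxpos m
  have hC2 : 0 ≤ C ^ 2 * x 0 * m :=
    mul_nonneg (mul_nonneg (sq_nonneg C) (le_of_lt h0)) (Nat.cast_nonneg m)
  have hd : 0 < 1 + C ^ 2 * x 0 * m := by linarith
  rw [show (a m / (b m) ^ 2) = x m from rfl, le_div_iff₀ hd]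
  have hk := key m
  have e0 : (1 / x 0) * x 0 = 1 := one_div_mul_cancel (ne_of_gt h0)
  have e1 : (1 / x m) * x m = 1 := one_div_mul_cancel (ne_of_gt hm)
  nlinarith [mul_le_mul_of_nonneg_right hk (le_of_lt (mul_pos hm h0))]
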